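/- arXiv:2002.08709 — 4 statements merged into one kernel-verified Lean document; each statement's English description precedes it below -/
import Mathlib

section
/- Let X be a real-valued integrable random variable (the empirical risk estimator) with E[X²] < ∞, let R be a real constant (the true risk), and let b be a real constant (the flood level). Define the flooded estimator Y = |X - b| + b. Then E[(X - R)²] - E[(Y - R)²] = E[B], where B = 0 on the event {X ≥ b} and B = -4(b - X)(b - R) on the event {X < b}. -/
open MeasureTheory

/-- Flooding fixes `x ≥ b` and reflects `x < b` to `2 b - x`. -/
theorem sq_sub_sub_sq_abs_sub_add (x R b : ℝ) :
    (x - R) ^ 2 - ((|x - b| + b) - R) ^ 2 =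
      if b ≤ x then 0 else -4 * (b - x) * (b - R) := by
  split_ifs with hbx
  · rw [abs_of_nonneg (sub_nonneg.mpr hbx)]
    ring
  · rw [abs_of_neg (sub_neg.mpr (not_le.mp hbx))]
    ring

section Integrability

variable {Ω : Type*} [MeasurableSpace Ω] {μ : Measure Ω} [IsFiniteMeasure μ] {f : Ω → ℝ}

theorem MeasureTheory.MemLp.integrable_sub_const_sq (hf : MemLp f 2 μ) (c : ℝ) :
    Integrable (fun ω => (f ω - c) ^ 2) μ :=
  (hf.sub (memLp_const c)).integrable_sq

theorem MeasureTheory.MemLp.abs_sub_const_add_const (hf : MemLp f 2 μ) (b : ℝ) :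
    MemLp (fun ω => |f ω - b| + b) 2 μ :=
  (hf.sub (memLp_const b)).abs.add (memLp_const b)

end Integrability

theorem flooding_mse_decomposition
    {Ω : Type*} [MeasurableSpace Ω] (μ : Measure Ω) [IsProbabilityMeasure μ]
    (X : Ω → ℝ) (hX : MemLp X 2 μ) (R b : ℝ) :
    (∫ ω, (X ω - R) ^ 2 ∂μ) - (∫ ω, ((|X ω - b| + b) - R) ^ 2 ∂μ) =
      ∫ ω, (if b ≤ X ω then (0 : ℝ) else -4 * (b - X ω) * (b - R)) ∂μ := by
  rw [← integral_sub (hX.integrable_sub_const_sq R)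
    ((hX.abs_sub_const_add_const b).integrable_sub_const_sq R)]
  exact integral_congr_ae <|
    Filter.Eventually.of_forall fun ω => sq_sub_sub_sq_abs_sub_add (X ω) R b
end

section
/- Let X be a square-integrable real random variable, R a real number, and b a real number with b ≤ R. Define Y = |X - b| + b. Then E[(Y - R)²] ≤ E[(X - R)²]. -/
open MeasureTheory

/-- Flooding reflects `x < b` to `2b - x`; the squared distance to `R` drops by `4 (b - x) (R - b)`. -/
theorem sq_abs_sub_add_sub_le {α : Type*} [CommRing α] [LinearOrder α] [IsStrictOrderedRing α]
    {b R : α} (hb : b ≤ R) (x : α) : (|x - b| + b - R) ^ 2 ≤ (x - R) ^ 2 := by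
  rcases le_total b x with hbx | hxb
  · rw [abs_of_nonneg (sub_nonneg.2 hbx), sub_add_cancel]
  · rw [abs_of_nonpos (sub_nonpos.2 hxb)]
    nlinarith [mul_nonneg (sub_nonneg.2 hxb) (sub_nonneg.2 hb)]

theorem flooding_mse_le
    {Ω : Type*} [MeasurableSpace Ω] (μ : Measure Ω) [IsProbabilityMeasure μ]
    (X : Ω → ℝ) (hX : MemLp X 2 μ) (R b : ℝ) (hb : b ≤ R) :
    (∫ ω, ((|X ω - b| + b) - R) ^ 2 ∂μ) ≤ ∫ ω, (X ω - R) ^ 2 ∂μ :=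
  integral_mono_of_nonneg (.of_forall fun _ => sq_nonneg _)
    (hX.sub (memLp_const R)).integrable_sq (.of_forall fun ω => sq_abs_sub_add_sub_le hb (X ω))
end

section
/- Let X be a square-integrable real random variable and R, b ∈ ℝ. Then E[(X − R)²] − E[(|X − b| + b − R)²] = 4·(R − b)·E[max(b − X, 0)]. -/
open MeasureTheory

/- Flooding reflects the values below `b` to `2b - x` and leaves the others alone, so the squared
error changes only where `x < b`, and there by `(x - R)^2 - (2b - x - R)^2 = 4 (R - b) (b - x)`.
Integrating this pointwise identity gives the formula. -/

lemma sub_sq_sub_flood_sq (x R b : ℝ) :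
    (x - R) ^ 2 - ((|x - b| + b) - R) ^ 2 = 4 * (R - b) * max (b - x) 0 := by
  rcases le_total b x with hbx | hxb
  · rw [abs_of_nonneg (sub_nonneg.mpr hbx), max_eq_right (sub_nonpos.mpr hbx)]
    ring
  · rw [abs_of_nonpos (sub_nonpos.mpr hxb), max_eq_left (sub_nonneg.mpr hxb)]
    ring

theorem flooding_mse_reduction_formula
    {Ω : Type*} [MeasurableSpace Ω] (μ : Measure Ω) [IsProbabilityMeasure μ]
    (X : Ω → ℝ) (hX : MemLp X 2 μ) (R b : ℝ) :
    (∫ ω, (X ω - R) ^ 2 ∂μ) - (∫ ω, ((|X ω - b| + b) - R) ^ 2 ∂μ) =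
      4 * (R - b) * ∫ ω, max (b - X ω) 0 ∂μ := by
  have h_mse : Integrable (fun ω => (X ω - R) ^ 2) μ :=
    (hX.sub (memLp_const R)).integrable_sq
  have h_flooded : Integrable (fun ω => ((|X ω - b| + b) - R) ^ 2) μ :=
    (((hX.sub (memLp_const b)).abs.add (memLp_const b)).sub (memLp_const R)).integrable_sq
  rw [← integral_sub h_mse h_flooded, ← integral_const_mul]
  simp_rw [sub_sq_sub_flood_sq]
end

section
/- For fixed b ∈ ℝ and R ≥ b, the function x ↦ ((|x − b| + b) − R)² is less than or equal to x ↦ (x − R)² pointwise on ℝ. -/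
theorem flooding_pointwise_domination (b R : ℝ) (hbR : b ≤ R) (x : ℝ) :
    ((|x - b| + b) - R) ^ 2 ≤ (x - R) ^ 2 := by
  rcases abs_cases (x - b) with ⟨h, _⟩ | ⟨h, hx⟩
  · rw [h]; ring_nf; exact le_refl _
  · rw [h]; nlinarith
end
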